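/- arXiv:math/0609113 — 7 statements merged into one kernel-verified Lean document; each statement's English description precedes it below -/
import Mathlib

section
/- The map f_a(x,y) = (y(x+a)/(x-1), x+a-1) is the composition τ∘σ of the two involutions τ(x,y) = (x(a-y)/(1+y), a-1-y) and σ(x,y) = (-y,-x); moreover τ and σ are each involutions on their domains of definition. -/
/-- The birational map `f_a(x,y) = (y(x+a)/(x-1), x+a-1)`. -/
noncomputable def fa (a : ℝ) (p : ℝ × ℝ) : ℝ × ℝ :=
  (p.2 * (p.1 + a) / (p.1 - 1), p.1 + a - 1)

/-- The involution `τ(x,y) = (x(a-y)/(1+y), a-1-y)`. -/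
noncomputable def tau (a : ℝ) (p : ℝ × ℝ) : ℝ × ℝ :=
  (p.1 * (a - p.2) / (1 + p.2), a - 1 - p.2)

/-- The involution `σ(x,y) = (-y,-x)`. -/
def sigma' (p : ℝ × ℝ) : ℝ × ℝ := (-p.2, -p.1)

theorem sigma'_involutive : Function.Involutive sigma' := fun p => by
  simp [sigma']

/-- Holds even at `x = 1`, where both first coordinates are the junk value `0`. -/
theorem tau_sigma'_eq_fa (a : ℝ) (p : ℝ × ℝ) : tau a (sigma' p) = fa a p := by
  have hden : 1 + -p.1 = -(p.1 - 1) := by ring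
  simp only [tau, sigma', fa, Prod.mk.injEq, hden, sub_neg_eq_add, neg_mul, neg_div_neg_eq]
  constructor <;> ring

theorem tau_tau {a : ℝ} {p : ℝ × ℝ} (h₁ : p.2 ≠ -1) (h₂ : p.2 ≠ a) : tau a (tau a p) = p := by
  have hy : 1 + p.2 ≠ 0 := fun h => h₁ (by linarith)
  have hay : a - p.2 ≠ 0 := sub_ne_zero.mpr h₂.symm
  have hden : 1 + (a - 1 - p.2) = a - p.2 := by ring
  have hnum : a - (a - 1 - p.2) = 1 + p.2 := by ring
  ext
  · simp only [tau, hden, hnum]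
    field_simp
  · simp only [tau]
    ring

/-- `f_a = τ ∘ σ`, and `τ`, `σ` are involutions on their domains of definition. -/
theorem fa_eq_tau_comp_sigma_and_involutions (a : ℝ) :
    (∀ x y : ℝ, x ≠ 1 → tau a (sigma' (x, y)) = fa a (x, y)) ∧
    (∀ x y : ℝ, y ≠ -1 → y ≠ a → tau a (tau a (x, y)) = (x, y)) ∧
    (∀ x y : ℝ, sigma' (sigma' (x, y)) = (x, y)) :=
  ⟨fun x y _ => tau_sigma'_eq_fa a (x, y),
    fun _ _ h₁ h₂ => tau_tau h₁ h₂,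
    fun x y => sigma'_involutive (x, y)⟩
end

section
/- The inverse of f_a is f_a^{-1} = σ∘τ, i.e. for points where everything is defined, σ(τ(f_a(x,y))) = (x,y) and f_a(σ(τ(x,y))) = (x,y). -/
/-- The inverse of `f_a` is `σ ∘ τ`: at points where all denominators are nonzero,
`σ(τ(f_a(x,y))) = (x,y)` and `f_a(σ(τ(x,y))) = (x,y)`. -/
theorem fa_inv_eq_sigma_comp_tau (a : ℝ) :
    (∀ x y : ℝ, x ≠ 1 → x ≠ -a → sigma' (tau a (fa a (x, y))) = (x, y)) ∧
    (∀ x y : ℝ, y ≠ -1 → y ≠ a → fa a (sigma' (tau a (x, y))) = (x, y)) := by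
  constructor
  · intro x y hx1 hxa
    have h1 : x - 1 ≠ 0 := sub_ne_zero.mpr hx1
    have h2 : x + a ≠ 0 := by intro h; apply hxa; linarith
    simp only [fa, tau, sigma', Prod.mk.injEq]
    constructor
    · ring_nf
    · field_simp
      ring_nf
      field_simp
      ring
  · intro x y hy1 hya
    have h1 : 1 + y ≠ 0 := by intro h; apply hy1; linarith
    have h2 : y - a ≠ 0 := sub_ne_zero.mpr hya
    simp only [fa, tau, sigma', Prod.mk.injEq]
    constructor
    · rw [← neg_div, div_mul_eq_mul_div, div_div, div_eq_iff (by intro h; apply mul_ne_zero h1 h2; nlinarith)]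
      ring
    · ring_nf
end

section
/- The map f_a preserves the two-form η = dx∧dy/(y-x+1); equivalently, the Jacobian determinant of f_a at (x,y) equals (f_a(x,y)_2 - f_a(x,y)_1 + 1)/(y - x + 1) whenever x ≠ 1 and y - x + 1 ≠ 0. -/
theorem fa_preserves_eta_general (a x y : ℝ) (hx : x ≠ 1) :
    (deriv (fun s : ℝ => y * (s + a) / (s - 1)) x *
       deriv (fun t : ℝ => x + a - 1) y -
     deriv (fun t : ℝ => t * (x + a) / (x - 1)) y *
       deriv (fun s : ℝ => s + a - 1) x) * (y - x + 1)
    = (x + a - 1) - y * (x + a) / (x - 1) + 1 := by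
  have hx1 : x - 1 ≠ 0 := sub_ne_zero.mpr hx
  -- The second component does not depend on `y`, so the Jacobian is `-(x + a) / (x - 1)`.
  simp only [deriv_const, deriv_div_const, deriv_mul_const_field', deriv_id'', deriv_sub_const,
    deriv_add_const]
  field_simp
  ring

/-- `f_a` preserves the two-form `η = dx∧dy/(y-x+1)`: the Jacobian determinant of
`f_a` at `(x,y)`, multiplied by `y - x + 1`, equals
`(f_a(x,y))_2 - (f_a(x,y))_1 + 1` whenever `x ≠ 1` and `y - x + 1 ≠ 0`. -/
theorem fa_preserves_eta (a x y : ℝ) (hx : x ≠ 1) (h : y - x + 1 ≠ 0) :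
    (deriv (fun s : ℝ => y * (s + a) / (s - 1)) x *
       deriv (fun t : ℝ => x + a - 1) y -
     deriv (fun t : ℝ => t * (x + a) / (x - 1)) y *
       deriv (fun s : ℝ => s + a - 1) x) * (y - x + 1)
    = (x + a - 1) - y * (x + a) / (x - 1) + 1 :=
  fa_preserves_eta_general a x y hx
end

section
/- For a ≥ 0 and a ≠ -1, the eigenvalues of the Jacobian matrix Df_a at the fixed point p_fix = ((1-a)/2,(a-1)/2) are the complex conjugate pair λ = (i+√a)/(i-√a) and its conjugate, each of modulus 1. -/
/-!
The Jacobian is `!![2(1-a)/(1+a), -1; 1, 0]`, with characteristic polynomial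
`X² - 2(1-a)/(1+a) X + 1`. For any `z : ℂ`, `(X - z)(X - z̄) = X² - 2 Re z X + |z|²`. For
`z = (i+t)/(i-t)` with `t` real, `i - t = -conj (i + t)` gives `|z| = 1`, and
`Re z = (1-t²)/(1+t²)`, which is `(1-a)/(1+a)` at `t = √a`.
-/

open Polynomial

/-- The real Jacobian matrix of `f_a(x,y) = (y(x+a)/(x-1), x+a-1)` at the fixed point
`p_fix = ((1-a)/2, (a-1)/2)`, with entries given by the partial derivatives. -/
noncomputable def Dfa (a : ℝ) : Matrix (Fin 2) (Fin 2) ℝ :=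
  !![deriv (fun s : ℝ => ((a - 1) / 2) * (s + a) / (s - 1)) ((1 - a) / 2),
     deriv (fun t : ℝ => t * (((1 - a) / 2) + a) / (((1 - a) / 2) - 1)) ((a - 1) / 2);
     deriv (fun s : ℝ => s + a - 1) ((1 - a) / 2),
     deriv (fun _ : ℝ => ((1 - a) / 2) + a - 1) ((a - 1) / 2)]

open Complex ComplexConjugate

lemma deriv_mul_add_div_sub_one (c a : ℝ) {x : ℝ} (hx : x ≠ 1) :
    deriv (fun s : ℝ => c * (s + a) / (s - 1)) x = -c * (1 + a) / (x - 1) ^ 2 := by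
  have h := (((hasDerivAt_id' x).add_const a).const_mul c).div
    ((hasDerivAt_id' x).sub_const 1) (sub_ne_zero.mpr hx)
  exact h.deriv.trans (by ring)

lemma Dfa_eq {a : ℝ} (ha : a ≠ -1) : Dfa a = !![2 * (1 - a) / (1 + a), -1; 1, 0] := by
  have h1a : 1 + a ≠ 0 := fun h => ha (by linarith)
  have hx : (1 - a) / 2 ≠ 1 := fun h => ha (by linarith)
  have hd : (1 - a) / 2 - 1 ≠ 0 := sub_ne_zero.mpr hx
  have h00 : -((a - 1) / 2) * (1 + a) / ((1 - a) / 2 - 1) ^ 2 = 2 * (1 - a) / (1 + a) := by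
    rw [div_eq_div_iff (pow_ne_zero 2 hd) h1a]
    ring
  have h01 : ((1 - a) / 2 + a) / ((1 - a) / 2 - 1) = -1 := by
    rw [div_eq_iff hd]
    ring
  rw [Dfa, deriv_mul_add_div_sub_one _ _ hx, h00]
  simp [h01]

lemma charpoly_map_ofReal {n : Type*} [Fintype n] [DecidableEq n] (M : Matrix n n ℝ) :
    (M.map ofReal).charpoly = M.charpoly.map ofRealHom :=
  M.charpoly_map ofRealHom

lemma X_sub_C_mul_X_sub_C_conj (z : ℂ) :
    (X - C z) * (X - C (conj z)) = X ^ 2 - C ((2 * z.re : ℝ) : ℂ) * X + C (normSq z : ℂ) := by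
  rw [← add_conj, ← mul_conj, map_add, map_mul]
  ring

lemma norm_I_add_div_I_sub (t : ℝ) : ‖(I + t) / (I - t)‖ = 1 := by
  have h : I - t = -conj (I + t) := by rw [map_add, conj_I, conj_ofReal]; ring
  rw [h, norm_div, norm_neg, RCLike.norm_conj, div_self]
  exact norm_ne_zero_iff.mpr fun h => by simpa using congrArg im h

lemma re_I_add_div_I_sub (t : ℝ) : ((I + t) / (I - t)).re = (1 - t ^ 2) / (1 + t ^ 2) := by
  simp only [div_re, add_re, I_re, ofReal_re, zero_add, sub_re, zero_sub, mul_neg, normSq_apply,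
    neg_mul, neg_neg, sub_im, I_im, ofReal_im, sub_zero, mul_one, add_im, add_zero, one_div]
  field_simp
  ring

/-- For `a ≥ 0`, `a ≠ -1`, the eigenvalues of `Df_a(p_fix)` (viewed as a complex
matrix) are the complex conjugate pair `λ = (i+√a)/(i-√a)` and its conjugate, each of
modulus 1. -/
theorem eigenvalues_at_fixed_point (a : ℝ) (ha : 0 ≤ a) (ha' : a ≠ -1) :
    ((Dfa a).map (Complex.ofReal)).charpoly =
      (X - C ((Complex.I + Real.sqrt a) / (Complex.I - Real.sqrt a))) *
      (X - C (starRingEnd ℂ ((Complex.I + Real.sqrt a) / (Complex.I - Real.sqrt a)))) ∧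
    ‖((Complex.I + Real.sqrt a) / (Complex.I - Real.sqrt a) : ℂ)‖ = 1 := by
  have hnorm := norm_I_add_div_I_sub √a
  refine ⟨?_, hnorm⟩
  rw [X_sub_C_mul_X_sub_C_conj, normSq_eq_norm_sq, hnorm, re_I_add_div_I_sub, Real.sq_sqrt ha,
    charpoly_map_ofReal, Matrix.charpoly_fin_two, Dfa_eq ha']
  simp [Matrix.trace_fin_two, Matrix.det_fin_two, mul_div_assoc]
end

section
/- For a > 1, every point of T₀⁺ = {(x,y) : x > 1, y > a} has forward orbit under f_a tending to infinity: for any (x,y) ∈ T₀⁺, both coordinates of f_a^n(x,y) tend to +∞ as n → ∞. -/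
/-!
On `T₀⁺` the first coordinate of `f_a(x,y)` exceeds `y` (as `x + a > x - 1`), while the second
is `x + a - 1`; in particular `T₀⁺` is invariant. Hence two steps of `f_a` increase each
coordinate by more than `a - 1 > 0`, and a sequence gaining a fixed positive amount every `m`
steps tends to infinity.
-/

open Filter

open Set

lemma add_nsmul_le_of_add_le_comp_add {α : Type*} [AddCommMonoid α] [PartialOrder α]
    [IsOrderedAddMonoid α] {g : ℕ → α} {m : ℕ} {c : α} (h : ∀ n, g n + c ≤ g (n + m))
    (r k : ℕ) : g r + k • c ≤ g (r + m * k) := by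
  induction k with
  | zero => simp
  | succ k ih =>
    calc g r + (k + 1) • c = (g r + k • c) + c := by rw [succ_nsmul, add_assoc]
      _ ≤ g (r + m * k) + c := by gcongr
      _ ≤ g (r + m * (k + 1)) := by rw [mul_add_one, ← add_assoc]; exact h _

lemma tendsto_atTop_of_add_le_comp_add {α : Type*} [Field α] [LinearOrder α]
    [IsStrictOrderedRing α] [Archimedean α] {g : ℕ → α} {m : ℕ} {c : α} (hm : m ≠ 0)
    (hc : 0 < c) (h : ∀ n, g n + c ≤ g (n + m)) : Tendsto g atTop atTop := by
  obtain ⟨B, hB⟩ : BddBelow (g '' Iio m) := ((finite_Iio m).image g).bddBelow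
  have hbound : ∀ n, B + (n / m : ℕ) * c ≤ g n := fun n => by
    have hmod := add_nsmul_le_of_add_le_comp_add h (n % m) (n / m)
    rw [Nat.mod_add_div, nsmul_eq_mul] at hmod
    have := hB (mem_image_of_mem g (Nat.mod_lt n (Nat.pos_of_ne_zero hm)))
    linarith
  refine tendsto_atTop_mono hbound (tendsto_atTop_add_const_left _ B ?_)
  exact (tendsto_natCast_atTop_atTop.comp (Nat.tendsto_div_const_atTop hm)).atTop_mul_const hc

def T0 (a : ℝ) : Set (ℝ × ℝ) := {p | 1 < p.1 ∧ a < p.2}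

lemma fa_snd (a : ℝ) (p : ℝ × ℝ) : (fa a p).2 = p.1 + a - 1 := rfl

lemma snd_lt_fa_fst {a : ℝ} {p : ℝ × ℝ} (ha : -1 < a) (hx : 1 < p.1) (hy : 0 < p.2) :
    p.2 < (fa a p).1 := by
  rw [fa, lt_div_iff₀ (by linarith)]
  nlinarith

lemma mapsTo_fa_T0 {a : ℝ} (ha : 1 ≤ a) : MapsTo (fa a) (T0 a) (T0 a) := by
  rintro p ⟨hx, hy⟩
  refine ⟨?_, by rw [fa_snd]; linarith⟩
  calc 1 ≤ a := ha
    _ < p.2 := hy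
    _ < (fa a p).1 := snd_lt_fa_fst (by linarith) hx (by linarith)

lemma fst_add_lt_fa_fa_fst {a : ℝ} (ha : 1 ≤ a) {p : ℝ × ℝ} (hp : p ∈ T0 a) :
    p.1 + (a - 1) < (fa a (fa a p)).1 := by
  obtain ⟨hx, hy⟩ := mapsTo_fa_T0 ha hp
  have := snd_lt_fa_fst (a := a) (by linarith) hx (by linarith)
  rw [fa_snd] at this
  linarith

lemma snd_add_lt_fa_fa_snd {a : ℝ} (ha : 1 ≤ a) {p : ℝ × ℝ} (hp : p ∈ T0 a) :
    p.2 + (a - 1) < (fa a (fa a p)).2 := by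
  rw [fa_snd]
  linarith [snd_lt_fa_fst (a := a) (by linarith) hp.1 (by linarith [hp.2])]

/-- For `a > 1`, every point of `T₀⁺ = {(x,y) : x > 1, y > a}` has forward orbit
under `f_a` tending to infinity: both coordinates of `f_a^n(x,y)` tend to `+∞`. -/
theorem T0_orbits_tend_to_infinity (a : ℝ) (ha : 1 < a) (p : ℝ × ℝ)
    (h1 : 1 < p.1) (h2 : a < p.2) :
    Tendsto (fun n : ℕ => ((fa a)^[n] p).1) atTop atTop ∧
    Tendsto (fun n : ℕ => ((fa a)^[n] p).2) atTop atTop := by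
  have horbit : ∀ n, (fa a)^[n] p ∈ T0 a := fun n => (mapsTo_fa_T0 ha.le).iterate n ⟨h1, h2⟩
  have hstep : ∀ n, (fa a)^[n + 2] p = fa a (fa a ((fa a)^[n] p)) := fun n => by
    simp only [Function.iterate_succ_apply']
  have hc : 0 < a - 1 := sub_pos.2 ha
  constructor
  · refine tendsto_atTop_of_add_le_comp_add two_ne_zero hc fun n => ?_
    rw [hstep]
    exact (fst_add_lt_fa_fa_fst ha.le (horbit n)).le
  · refine tendsto_atTop_of_add_le_comp_add two_ne_zero hc fun n => ?_
    rw [hstep]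
    exact (snd_add_lt_fa_fa_snd ha.le (horbit n)).le
end

section
/- For a > 1, the set A = {(x,y) : x > 1, y < -x} and its preimage satisfy A ∩ f_a^{-1}(A) = ∅; that is, no point (x,y) with x > 1 and y < -x has f_a(x,y) also satisfying those inequalities. -/
theorem fa_fst_neg {a x y : ℝ} (hx : 1 < x) (hy : y < 0) (hxa : 0 < x + a) :
    (fa a (x, y)).1 < 0 :=
  div_neg_of_neg_of_pos (mul_neg_of_neg_of_pos hy hxa) (sub_pos.mpr hx)

/-- For `a > 1`, with `A = {(x,y) : x > 1, y < -x}`, we have `A ∩ f_a⁻¹(A) = ∅`: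
no point of `A` maps into `A`. -/
theorem A_inter_preimage_empty (a : ℝ) (ha : 1 < a) (x y : ℝ)
    (hx : 1 < x) (hy : y < -x) :
    ¬(1 < (fa a (x, y)).1 ∧ (fa a (x, y)).2 < -(fa a (x, y)).1) := by
  rintro ⟨hfst, -⟩
  have := fa_fst_neg (a := a) (y := y) hx (by linarith) (by linarith)
  linarith
end

section
/- For a > 1, in the adapted coordinates on S₂ and S₃, f_a maps S₂ into S₃ ∪ (the escape region): if 0 ≤ y₂ and 0 ≤ x₂ ≤ y₂ + (a+1)/2, then (x₃, y₃) = ((−1 + a² + 2y₂(x₂ + a − 1))/(2(y₂ + a + 1)), y₂) satisfies x₃ ≥ 0, y₃ ≥ 0, and y₃ + (a+1)/2 − x₃ > 0. -/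
/-! Both inequalities are cleared of the positive denominator `2 (y₂ + a + 1)`. The numerator
is nonnegative since `a² - 1 ≥ 0` and `x₂ + a - 1 ≥ 0`; and the gap in the strict bound is
`2 y₂ (y₂ + (a + 1)/2 - x₂) + 4 y₂ + 2 (a + 1)`, positive as soon as `x₂ ≤ y₂ + (a + 1)/2`. -/

namespace FaS2S3

/-- The adapted coordinate `x₃` of `f_a (x₂, y₂)`. -/
noncomputable def imageX (a x₂ y₂ : ℝ) : ℝ :=
  (-1 + a ^ 2 + 2 * y₂ * (x₂ + a - 1)) / (2 * (y₂ + a + 1))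

lemma imageX_nonneg {a x₂ y₂ : ℝ} (ha : 1 ≤ a) (hx₂ : 0 ≤ x₂) (hy₂ : 0 ≤ y₂) :
    0 ≤ imageX a x₂ y₂ := by
  have hsq : 1 ≤ a ^ 2 := one_le_pow₀ ha
  have hprod : 0 ≤ y₂ * (x₂ + a - 1) := mul_nonneg hy₂ (by linarith)
  have hnum : 0 ≤ -1 + a ^ 2 + 2 * y₂ * (x₂ + a - 1) := by linarith
  exact div_nonneg hnum (by linarith)

lemma imageX_lt {a x₂ y₂ : ℝ} (ha : -1 < a) (hy₂ : 0 ≤ y₂) (hx₂ : x₂ ≤ y₂ + (a + 1) / 2) :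
    imageX a x₂ y₂ < y₂ + (a + 1) / 2 := by
  have hden : 0 < 2 * (y₂ + a + 1) := by linarith
  have hgap : (y₂ + (a + 1) / 2) * (2 * (y₂ + a + 1)) - (-1 + a ^ 2 + 2 * y₂ * (x₂ + a - 1))
      = 2 * y₂ * (y₂ + (a + 1) / 2 - x₂) + 4 * y₂ + 2 * (a + 1) := by ring
  have hprod : 0 ≤ y₂ * (y₂ + (a + 1) / 2 - x₂) := mul_nonneg hy₂ (by linarith)
  rw [imageX, div_lt_iff₀ hden]
  linarith

end FaS2S3

/-- For `a > 1`, in adapted coordinates, `f_a` maps `S₂` into `S₃` (or the escape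
region): if `0 ≤ y₂` and `0 ≤ x₂ ≤ y₂ + (a+1)/2`, then
`(x₃, y₃) = ((−1 + a² + 2y₂(x₂ + a − 1))/(2(y₂ + a + 1)), y₂)` satisfies
`x₃ ≥ 0`, `y₃ ≥ 0` and `y₃ + (a+1)/2 − x₃ > 0`. -/
theorem fa_maps_S2_to_S3 (a : ℝ) (ha : 1 < a) (x₂ y₂ : ℝ)
    (hy₂ : 0 ≤ y₂) (hx₂ : 0 ≤ x₂) (hx₂' : x₂ ≤ y₂ + (a + 1) / 2) :
    let x₃ := (-1 + a ^ 2 + 2 * y₂ * (x₂ + a - 1)) / (2 * (y₂ + a + 1))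
    let y₃ := y₂
    0 ≤ x₃ ∧ 0 ≤ y₃ ∧ 0 < y₃ + (a + 1) / 2 - x₃ :=
  ⟨FaS2S3.imageX_nonneg ha.le hx₂ hy₂, hy₂, sub_pos.mpr (FaS2S3.imageX_lt (by linarith) hy₂ hx₂')⟩
end
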